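/- (Strong Lyapunov property of the accelerated transformed primal-dual flow.) Let I_V (m×m) and I_Q (n×n) be symmetric positive definite, B ∈ ℝ^{n×m}, S = B I_V^{−1} Bᵀ. Let f : ℝ^m → ℝ be differentiable with (μ_f/2)‖u−u'‖²_{I_V} ≤ D_f(u,u') ≤ (L_f/2)‖u−u'‖²_{I_V}, μ_f > 0 and L_f ≤ 3/4; let g : ℝ^n → ℝ be differentiable, convex, and μ_g-strongly convex in the I_Q-norm (μ_g ≥ 0), and set g_S(p) = g(p) + (1/2)pᵀSp. Assume (2/3 − μ_g) pᵀI_Q p ≤ pᵀSp ≤ (1/(2L_f)) pᵀI_Q p for all p ∈ ℝ^n. Let (u*, p*) satisfy ∇f(u*) + Bᵀp* = 0 and −Bu* + ∇g(p*) = 0. Define E(u,v,p,q) = D_f(u,u*) + (μ_f/2)‖v−u*‖²_{I_V} + D_{g_S}(p,p*) + (1/2)‖q−p*‖²_{I_Q}, and the vector field G^u = v − u, G^v = (1/2)(u − v) − (1/μ_f) I_V^{−1}(∇f(u) + Bᵀq), G^p = q − p, G^q = p − q − I_Q^{−1}(∇g_S(p) − Bv + B I_V^{−1}∇f(u)). Then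 for all (u,v,p,q): −[⟨∇f(u)−∇f(u*), G^u⟩ + μ_f⟨I_V(v−u*), G^v⟩ + ⟨∇g_S(p)−∇g_S(p*), G^p⟩ + ⟨I_Q(q−p*), G^q⟩] ≥ (1/2) E(u,v,p,q). -/

import Mathlib

open Matrix

/-- Bregman divergence `D_h(x,y) = h(x) - h(y) - ⟨∇h(y), x - y⟩`. -/
noncomputable def breg {d : ℕ} (h : (Fin d → ℝ) → ℝ)
    (gradh : (Fin d → ℝ) → (Fin d → ℝ)) (x y : Fin d → ℝ) : ℝ :=
  h x - h y - gradh y ⬝ᵥ (x - y)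

/-- The continuous linear functional `v ↦ ⟨z, v⟩`. -/
noncomputable def dpCLM {d : ℕ} (z : Fin d → ℝ) : (Fin d → ℝ) →L[ℝ] ℝ :=
  LinearMap.toContinuousLinearMap
    { toFun := fun v => z ⬝ᵥ v
      map_add' := fun a b => by simp [dotProduct_add]
      map_smul' := fun c a => by simp [dotProduct_smul] }

/-!
Write `x = u - u*`, `w = v - u*`, `r = p - p*`, `s = q - p*` and `e = ∇f(u) - ∇f(u*)`.
Because `(u*, u*, p*, p*)` is a zero of the vector field and `I_V`, `I_Q` are symmetric, the
pairing `-∇E · G` equals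
`-(μ_f/2)⟨x, w⟩_V + (μ_f/2)‖w‖²_V + ⟨e, x⟩ + ⟨∇g_S(p) - ∇g_S(p*), r⟩ - ⟨s, r⟩_Q + ‖s‖²_Q
 + ⟨s, B I_V⁻¹ e⟩`,
where the two middle inner products are symmetrised Bregman divergences. Young's inequality
handles `⟨x, w⟩_V` and `⟨s, r⟩_Q`. The coupling term is bounded by Young's inequality in the
`I_V⁻¹`-norm with weight `L_f`, using `‖Bᵀs‖²_{I_V⁻¹} = ‖s‖²_S ≤ ‖s‖²_Q / (2L_f)` and the
smoothness estimate `‖∇f(x) - ∇f(y)‖²_{I_V⁻¹} ≤ 2L_f D_f(x,y)`. Finally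
`D_{g_S} = D_g + ½‖·‖²_S ≥ ⅓‖·‖²_Q` by the lower bound on `S`, and the remaining terms are
absorbed by strong convexity of `f`.
-/

namespace Matrix

variable {ι : Type*} {M : Matrix ι ι ℝ}

lemma PosSemidef.isSymm (hM : M.PosSemidef) : M.IsSymm :=
  isHermitian_iff_isSymm.mp hM.isHermitian

variable [Fintype ι]

lemma sub_dotProduct_mulVec_sub_comm (M : Matrix ι ι ℝ) (x y : ι → ℝ) :
    (x - y) ⬝ᵥ M *ᵥ (x - y) = (y - x) ⬝ᵥ M *ᵥ (y - x) := by
  rw [← neg_sub y x, mulVec_neg, dotProduct_neg, neg_dotProduct, neg_neg]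

lemma IsSymm.mulVec_dotProduct (hM : M.IsSymm) (x y : ι → ℝ) :
    (M *ᵥ x) ⬝ᵥ y = x ⬝ᵥ M *ᵥ y := by
  rw [dotProduct_mulVec, ← mulVec_transpose, hM.eq]

lemma IsSymm.dotProduct_mulVec_comm (hM : M.IsSymm) (x y : ι → ℝ) :
    x ⬝ᵥ M *ᵥ y = y ⬝ᵥ M *ᵥ x := by
  rw [← hM.mulVec_dotProduct, dotProduct_comm]

lemma PosSemidef.dotProduct_mulVec_self_nonneg (hM : M.PosSemidef) (x : ι → ℝ) :
    0 ≤ x ⬝ᵥ M *ᵥ x := by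
  simpa using hM.dotProduct_mulVec_nonneg x

lemma PosSemidef.two_mul_dotProduct_mulVec_le (hM : M.PosSemidef) (x y : ι → ℝ) {t : ℝ}
    (ht : 0 < t) :
    2 * (x ⬝ᵥ M *ᵥ y) ≤ t * (x ⬝ᵥ M *ᵥ x) + t⁻¹ * (y ⬝ᵥ M *ᵥ y) := by
  have hsq := hM.dotProduct_mulVec_self_nonneg (t • x - y)
  simp only [mulVec_sub, mulVec_smul, dotProduct_sub, sub_dotProduct, dotProduct_smul,
    smul_dotProduct, smul_eq_mul, hM.isSymm.dotProduct_mulVec_comm y x] at hsq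
  have hexp : t * (x ⬝ᵥ M *ᵥ x) + t⁻¹ * (y ⬝ᵥ M *ᵥ y) - 2 * (x ⬝ᵥ M *ᵥ y)
      = t⁻¹ * (t * (t * (x ⬝ᵥ M *ᵥ x)) - t * (x ⬝ᵥ M *ᵥ y)
        - (t * (x ⬝ᵥ M *ᵥ y) - y ⬝ᵥ M *ᵥ y)) := by
    field_simp
    ring
  rw [← sub_nonneg, hexp]
  exact mul_nonneg (inv_nonneg.mpr ht.le) (by linarith)

variable [DecidableEq ι]

lemma mulVec_inv_mulVec (hM : IsUnit M) (x : ι → ℝ) : M *ᵥ (M⁻¹ *ᵥ x) = x := by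
  rw [mulVec_mulVec, mul_nonsing_inv _ ((isUnit_iff_isUnit_det M).mp hM), one_mulVec]

lemma IsSymm.mulVec_dotProduct_inv_mulVec (hM : M.IsSymm) (hMu : IsUnit M) (x y : ι → ℝ) :
    (M *ᵥ x) ⬝ᵥ (M⁻¹ *ᵥ y) = x ⬝ᵥ y := by
  rw [hM.mulVec_dotProduct, mulVec_inv_mulVec hMu]

end Matrix

section Bregman

variable {d : ℕ} (h : (Fin d → ℝ) → ℝ) (gh : (Fin d → ℝ) → (Fin d → ℝ))

lemma breg_add_breg_swap (x y : Fin d → ℝ) :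
    breg h gh x y + breg h gh y x = (gh x - gh y) ⬝ᵥ (x - y) := by
  simp only [breg, ← neg_sub x y, dotProduct_neg, sub_dotProduct]
  ring

lemma breg_three_point (x y z : Fin d → ℝ) :
    breg h gh z y = breg h gh z x + breg h gh x y + (gh x - gh y) ⬝ᵥ (z - x) := by
  simp only [breg, sub_dotProduct, dotProduct_sub]
  ring

lemma breg_add_half_quadratic {S : Matrix (Fin d) (Fin d) ℝ} (hS : S.IsSymm) (x y : Fin d → ℝ) :
    breg (fun z => h z + 1 / 2 * (z ⬝ᵥ S *ᵥ z)) (fun z => gh z + S *ᵥ z) x y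
      = breg h gh x y + 1 / 2 * ((x - y) ⬝ᵥ S *ᵥ (x - y)) := by
  simp only [breg, mulVec_sub, dotProduct_sub, sub_dotProduct, add_dotProduct,
    hS.mulVec_dotProduct, hS.dotProduct_mulVec_comm y x]
  ring

lemma sub_grad_sq_le_two_mul_breg {M : Matrix (Fin d) (Fin d) ℝ} (hM : IsUnit M) {L : ℝ}
    (hL : 0 < L) (hconv : ∀ x y, 0 ≤ breg h gh x y)
    (hup : ∀ x y, breg h gh x y ≤ L / 2 * ((x - y) ⬝ᵥ M *ᵥ (x - y))) (x y : Fin d → ℝ) :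
    (gh x - gh y) ⬝ᵥ M⁻¹ *ᵥ (gh x - gh y) ≤ 2 * L * breg h gh x y := by
  set e := gh x - gh y
  -- `0 ≤ D_h(x + δ, y)`, with the step `δ` that minimises the upper bound on `D_h(x + δ, x)`
  set δ := -(L⁻¹ • (M⁻¹ *ᵥ e))
  have hnonneg := hconv (x + δ) y
  have hstep := hup (x + δ) x
  rw [breg_three_point h gh x y] at hnonneg
  simp only [add_sub_cancel_left, δ, mulVec_neg, mulVec_smul, neg_dotProduct, dotProduct_neg,
    smul_dotProduct, dotProduct_smul, mulVec_inv_mulVec hM, smul_eq_mul,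
    dotProduct_comm (M⁻¹ *ᵥ e) e] at hnonneg hstep
  have hquad : L / 2 * (L⁻¹ * (L⁻¹ * (e ⬝ᵥ M⁻¹ *ᵥ e)))
      = L⁻¹ * (e ⬝ᵥ M⁻¹ *ᵥ e) - (2 * L)⁻¹ * (e ⬝ᵥ M⁻¹ *ᵥ e) := by
    field_simp
    ring
  have hscaled : (2 * L)⁻¹ * (e ⬝ᵥ M⁻¹ *ᵥ e) ≤ breg h gh x y := by linarith
  calc e ⬝ᵥ M⁻¹ *ᵥ e = 2 * L * ((2 * L)⁻¹ * (e ⬝ᵥ M⁻¹ *ᵥ e)) := by field_simp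
    _ ≤ 2 * L * breg h gh x y := by gcongr

end Bregman

lemma atpd_pairing_eq {m n : ℕ} {V : Matrix (Fin m) (Fin m) ℝ} {Q : Matrix (Fin n) (Fin n) ℝ}
    (hV : V.IsSymm) (hVu : IsUnit V) (hQ : Q.IsSymm) (hQu : IsUnit Q)
    (B : Matrix (Fin n) (Fin m) ℝ) {μ : ℝ} (hμ : μ ≠ 0)
    (u v us a as : Fin m → ℝ) (p q ps c cs : Fin n → ℝ)
    (hv : as + Bᵀ *ᵥ ps = 0) (hq : cs - B *ᵥ us + B *ᵥ (V⁻¹ *ᵥ as) = 0) :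
    (a - as) ⬝ᵥ (v - u)
        + μ * (V *ᵥ (v - us) ⬝ᵥ ((1 / 2 : ℝ) • (u - v) - (1 / μ) • V⁻¹ *ᵥ (a + Bᵀ *ᵥ q)))
        + (c - cs) ⬝ᵥ (q - p)
        + Q *ᵥ (q - ps) ⬝ᵥ (p - q - Q⁻¹ *ᵥ (c - B *ᵥ v + B *ᵥ (V⁻¹ *ᵥ a)))
      = μ / 2 * ((u - us) ⬝ᵥ V *ᵥ (v - us)) - μ / 2 * ((v - us) ⬝ᵥ V *ᵥ (v - us))
        - (a - as) ⬝ᵥ (u - us) - (c - cs) ⬝ᵥ (p - ps)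
        + (q - ps) ⬝ᵥ Q *ᵥ (p - ps) - (q - ps) ⬝ᵥ Q *ᵥ (q - ps)
        - (q - ps) ⬝ᵥ B *ᵥ (V⁻¹ *ᵥ (a - as)) := by
  have hvq : a + Bᵀ *ᵥ q = (a - as) + Bᵀ *ᵥ (q - ps) := by
    rw [mulVec_sub]; linear_combination hv
  have hpq : c - B *ᵥ v + B *ᵥ (V⁻¹ *ᵥ a)
      = (c - cs) - B *ᵥ (v - us) + B *ᵥ (V⁻¹ *ᵥ (a - as)) := by
    simp only [mulVec_sub]; linear_combination hq
  rw [hvq, hpq, show v - u = (v - us) - (u - us) by abel, show u - v = (u - us) - (v - us) by abel,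
    show q - p = (q - ps) - (p - ps) by abel, show p - q = (p - ps) - (q - ps) by abel]
  generalize u - us = x; generalize v - us = w; generalize p - ps = r; generalize q - ps = s
  generalize a - as = e; generalize c - cs = k
  simp only [dotProduct_sub, dotProduct_add, dotProduct_smul, smul_eq_mul,
    hV.mulVec_dotProduct_inv_mulVec hVu, hQ.mulVec_dotProduct_inv_mulVec hQu]
  simp only [hV.mulVec_dotProduct, hQ.mulVec_dotProduct]
  field_simp
  linear_combination 2 * dotProduct_comm e w + μ * hV.dotProduct_mulVec_comm w x
    - 2 * dotProduct_transpose_mulVec B w s + 2 * dotProduct_comm k s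

lemma atpd_cross_term_le {m n : ℕ} {V : Matrix (Fin m) (Fin m) ℝ} {Q : Matrix (Fin n) (Fin n) ℝ}
    (hV : V.PosDef) (hQ : Q.PosSemidef) (B : Matrix (Fin n) (Fin m) ℝ) {μ L : ℝ} (hμ : 0 < μ)
    {f : (Fin m → ℝ) → ℝ} {gradf : (Fin m → ℝ) → (Fin m → ℝ)}
    (hlow : ∀ x y, μ / 2 * ((x - y) ⬝ᵥ V *ᵥ (x - y)) ≤ breg f gradf x y)
    (hup : ∀ x y, breg f gradf x y ≤ L / 2 * ((x - y) ⬝ᵥ V *ᵥ (x - y)))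
    (u us : Fin m → ℝ) (s : Fin n → ℝ)
    (hs : s ⬝ᵥ (B * V⁻¹ * Bᵀ) *ᵥ s ≤ 1 / (2 * L) * (s ⬝ᵥ Q *ᵥ s)) :
    -(s ⬝ᵥ B *ᵥ (V⁻¹ *ᵥ (gradf u - gradf us)))
      ≤ s ⬝ᵥ Q *ᵥ s / 4 + (breg f gradf u us + breg f gradf us u) / 2 := by
  have hconv : ∀ x y, 0 ≤ breg f gradf x y := fun x y =>
    (mul_nonneg (by positivity) (hV.posSemidef.dotProduct_mulVec_self_nonneg _)).trans (hlow x y)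
  have hs0 := hQ.dotProduct_mulVec_self_nonneg s
  set e := gradf u - gradf us with he_def
  by_cases he : e = 0
  · simp only [he, mulVec_zero, dotProduct_zero, neg_zero]
    linarith [hconv u us, hconv us u]
  have hL : 0 < L := by
    have hne : u - us ≠ 0 := fun h => he (by rw [he_def, sub_eq_zero.mp h, sub_self])
    have hpos : 0 < (u - us) ⬝ᵥ V *ᵥ (u - us) := by simpa using hV.dotProduct_mulVec_pos hne
    nlinarith [hlow u us, hup u us]
  have hE : e ⬝ᵥ V⁻¹ *ᵥ e ≤ L * (breg f gradf u us + breg f gradf us u) := by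
    have h1 := sub_grad_sq_le_two_mul_breg f gradf hV.isUnit hL hconv hup u us
    have h2 := sub_grad_sq_le_two_mul_breg f gradf hV.isUnit hL hconv hup us u
    rw [← sub_dotProduct_mulVec_sub_comm] at h2
    linarith
  have hBs : (Bᵀ *ᵥ s) ⬝ᵥ V⁻¹ *ᵥ (Bᵀ *ᵥ s) ≤ 1 / (2 * L) * (s ⬝ᵥ Q *ᵥ s) := by
    rwa [← mulVec_mulVec, ← mulVec_mulVec, dotProduct_mulVec, ← mulVec_transpose] at hs
  have hyoung := hV.inv.posSemidef.two_mul_dotProduct_mulVec_le (Bᵀ *ᵥ s) (-e) hL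
  simp only [mulVec_neg, dotProduct_neg, neg_dotProduct, neg_neg] at hyoung
  rw [dotProduct_mulVec s B, ← mulVec_transpose]
  have h1 := mul_le_mul_of_nonneg_left hBs hL.le
  have h2 := mul_le_mul_of_nonneg_left hE (inv_nonneg.mpr hL.le)
  rw [show L * (1 / (2 * L) * (s ⬝ᵥ Q *ᵥ s)) = s ⬝ᵥ Q *ᵥ s / 2 by field_simp] at h1
  rw [inv_mul_cancel_left₀ hL.ne'] at h2
  linarith

theorem atpd_flow_strong_lyapunov_general
    {m n : ℕ}
    (IV : Matrix (Fin m) (Fin m) ℝ) (IQ : Matrix (Fin n) (Fin n) ℝ)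
    (hIV : IV.PosDef) (hIQ : IQ.PosDef)
    (B : Matrix (Fin n) (Fin m) ℝ)
    (μf Lf μg : ℝ) (hμf : 0 < μf)
    (f : (Fin m → ℝ) → ℝ) (gradf : (Fin m → ℝ) → (Fin m → ℝ))
    (hflow : ∀ u u' : Fin m → ℝ,
      μf / 2 * ((u - u') ⬝ᵥ IV.mulVec (u - u')) ≤ breg f gradf u u')
    (hfup : ∀ u u' : Fin m → ℝ,
      breg f gradf u u' ≤ Lf / 2 * ((u - u') ⬝ᵥ IV.mulVec (u - u')))
    (g : (Fin n → ℝ) → ℝ) (gradg : (Fin n → ℝ) → (Fin n → ℝ))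
    (hglow : ∀ p p' : Fin n → ℝ,
      μg / 2 * ((p - p') ⬝ᵥ IQ.mulVec (p - p')) ≤ breg g gradg p p')
    (gS : (Fin n → ℝ) → ℝ) (gradgS : (Fin n → ℝ) → (Fin n → ℝ))
    (hgS : ∀ p, gS p = g p + (1 / 2) * (p ⬝ᵥ (B * IV⁻¹ * Bᵀ).mulVec p))
    (hgradgS : ∀ p, gradgS p = gradg p + (B * IV⁻¹ * Bᵀ).mulVec p)
    (hSlow : ∀ p : Fin n → ℝ,
      (2 / 3 - μg) * (p ⬝ᵥ IQ.mulVec p) ≤ p ⬝ᵥ (B * IV⁻¹ * Bᵀ).mulVec p)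
    (hSup : ∀ p : Fin n → ℝ,
      p ⬝ᵥ (B * IV⁻¹ * Bᵀ).mulVec p ≤ (1 / (2 * Lf)) * (p ⬝ᵥ IQ.mulVec p))
    (us : Fin m → ℝ) (ps : Fin n → ℝ)
    (hsad1 : gradf us + Bᵀ.mulVec ps = 0)
    (hsad2 : -(B.mulVec us) + gradg ps = 0) :
    ∀ (u v : Fin m → ℝ) (p q : Fin n → ℝ),
      (1 / 2) * (breg f gradf u us
          + μf / 2 * ((v - us) ⬝ᵥ IV.mulVec (v - us))
          + breg gS gradgS p ps
          + (1 / 2) * ((q - ps) ⬝ᵥ IQ.mulVec (q - ps)))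
        ≤ -((gradf u - gradf us) ⬝ᵥ (v - u)
            + μf * (IV.mulVec (v - us) ⬝ᵥ
                ((1 / 2 : ℝ) • (u - v)
                  - (1 / μf) • IV⁻¹.mulVec (gradf u + Bᵀ.mulVec q)))
            + (gradgS p - gradgS ps) ⬝ᵥ (q - p)
            + IQ.mulVec (q - ps) ⬝ᵥ
                (p - q - IQ⁻¹.mulVec (gradgS p - B.mulVec v
                  + B.mulVec (IV⁻¹.mulVec (gradf u))))) := by
  intro u v p q
  have hS : (B * IV⁻¹ * Bᵀ).PosSemidef := by
    simpa using hIV.inv.posSemidef.mul_mul_conjTranspose_same B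
  have hdual : gradgS ps - B *ᵥ us + B *ᵥ (IV⁻¹ *ᵥ gradf us) = 0 := by
    rw [hgradgS, eq_neg_of_add_eq_zero_left hsad1, mulVec_neg, mulVec_neg, ← mulVec_mulVec,
      ← mulVec_mulVec]
    linear_combination hsad2
  have hDgS (x y : Fin n → ℝ) :
      breg gS gradgS x y = breg g gradg x y + 1 / 2 * ((x - y) ⬝ᵥ (B * IV⁻¹ * Bᵀ) *ᵥ (x - y)) := by
    obtain rfl : gS = _ := funext hgS
    obtain rfl : gradgS = _ := funext hgradgS
    exact breg_add_half_quadratic g gradg hS.isSymm x y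
  rw [atpd_pairing_eq hIV.posSemidef.isSymm hIV.isUnit hIQ.posSemidef.isSymm hIQ.isUnit B
      hμf.ne' u v us (gradf u) (gradf us) p q ps (gradgS p) (gradgS ps) hsad1 hdual,
    ← breg_add_breg_swap f gradf, ← breg_add_breg_swap gS gradgS, hDgS p ps, hDgS ps p]
  have hcross := atpd_cross_term_le hIV hIQ.posSemidef B hμf hflow hfup u us (q - ps) (hSup _)
  have hyoungV := mul_le_mul_of_nonneg_left
    (hIV.posSemidef.two_mul_dotProduct_mulVec_le (u - us) (v - us) one_pos) hμf.le
  have hyoungQ := hIQ.posSemidef.two_mul_dotProduct_mulVec_le (q - ps) (p - ps) one_pos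
  have hflow' := hflow us u
  have hglow' := hglow ps p
  rw [← sub_dotProduct_mulVec_sub_comm] at hflow' hglow'
  linarith [hflow u us, hglow p ps, hSlow (p - ps), sub_dotProduct_mulVec_sub_comm (B * IV⁻¹ * Bᵀ) p ps]

/-- **Strong Lyapunov property of the accelerated transformed primal-dual flow.**
With `E(u,v,p,q) = D_f(u,u*) + (μ_f/2)‖v-u*‖²_{I_V} + D_{g_S}(p,p*) + ½‖q-p*‖²_{I_Q}`
and the ATPD vector field `G`, one has `-∇E · G ≥ ½E`. -/
theorem atpd_flow_strong_lyapunov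
    {m n : ℕ}
    (IV : Matrix (Fin m) (Fin m) ℝ) (IQ : Matrix (Fin n) (Fin n) ℝ)
    (hIV : IV.PosDef) (hIQ : IQ.PosDef)
    (B : Matrix (Fin n) (Fin m) ℝ)
    (μf Lf μg : ℝ) (hμf : 0 < μf) (hLf : Lf ≤ 3 / 4) (hμg : 0 ≤ μg)
    (f : (Fin m → ℝ) → ℝ) (gradf : (Fin m → ℝ) → (Fin m → ℝ))
    (hf : ∀ u, HasFDerivAt f (dpCLM (gradf u)) u)
    (hflow : ∀ u u' : Fin m → ℝ,
      μf / 2 * ((u - u') ⬝ᵥ IV.mulVec (u - u')) ≤ breg f gradf u u')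
    (hfup : ∀ u u' : Fin m → ℝ,
      breg f gradf u u' ≤ Lf / 2 * ((u - u') ⬝ᵥ IV.mulVec (u - u')))
    (g : (Fin n → ℝ) → ℝ) (gradg : (Fin n → ℝ) → (Fin n → ℝ))
    (hg : ∀ p, HasFDerivAt g (dpCLM (gradg p)) p)
    (hgconv : ∀ p p' : Fin n → ℝ, 0 ≤ breg g gradg p p')
    (hglow : ∀ p p' : Fin n → ℝ,
      μg / 2 * ((p - p') ⬝ᵥ IQ.mulVec (p - p')) ≤ breg g gradg p p')
    (gS : (Fin n → ℝ) → ℝ) (gradgS : (Fin n → ℝ) → (Fin n → ℝ))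
    (hgS : ∀ p, gS p = g p + (1 / 2) * (p ⬝ᵥ (B * IV⁻¹ * Bᵀ).mulVec p))
    (hgradgS : ∀ p, gradgS p = gradg p + (B * IV⁻¹ * Bᵀ).mulVec p)
    (hSlow : ∀ p : Fin n → ℝ,
      (2 / 3 - μg) * (p ⬝ᵥ IQ.mulVec p) ≤ p ⬝ᵥ (B * IV⁻¹ * Bᵀ).mulVec p)
    (hSup : ∀ p : Fin n → ℝ,
      p ⬝ᵥ (B * IV⁻¹ * Bᵀ).mulVec p ≤ (1 / (2 * Lf)) * (p ⬝ᵥ IQ.mulVec p))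
    (us : Fin m → ℝ) (ps : Fin n → ℝ)
    (hsad1 : gradf us + Bᵀ.mulVec ps = 0)
    (hsad2 : -(B.mulVec us) + gradg ps = 0) :
    ∀ (u v : Fin m → ℝ) (p q : Fin n → ℝ),
      (1 / 2) * (breg f gradf u us
          + μf / 2 * ((v - us) ⬝ᵥ IV.mulVec (v - us))
          + breg gS gradgS p ps
          + (1 / 2) * ((q - ps) ⬝ᵥ IQ.mulVec (q - ps)))
        ≤ -((gradf u - gradf us) ⬝ᵥ (v - u)
            + μf * (IV.mulVec (v - us) ⬝ᵥ
                ((1 / 2 : ℝ) • (u - v)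
                  - (1 / μf) • IV⁻¹.mulVec (gradf u + Bᵀ.mulVec q)))
            + (gradgS p - gradgS ps) ⬝ᵥ (q - p)
            + IQ.mulVec (q - ps) ⬝ᵥ
                (p - q - IQ⁻¹.mulVec (gradgS p - B.mulVec v
                  + B.mulVec (IV⁻¹.mulVec (gradf u))))) :=
  atpd_flow_strong_lyapunov_general IV IQ hIV hIQ B μf Lf μg hμf f gradf hflow hfup g gradg hglow gS
    gradgS hgS hgradgS hSlow hSup us ps hsad1 hsad2
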